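/- Under conditions (A1)–(A4), E[||Ē_{1n}(β_{n0})||_F²] = O(n p_n²), where Ē_{1n}(β_{n0}) = (1/2) Σ_{i=1}^n Σ_{j=1}^m (1 − 2π_{ij}(β_{n0})) ε_{ij}(β_{n0}) X_i^T A_i^{1/2}(β_{n0}) R̄^{-1} e_j e_j^T X_i; consequently sup over unit vectors b ∈ R^{p_n} of |b^T Ē_{1n}(β_{n0}) b| is O_p(√n · p_n). -/

import Mathlib

open MeasureTheory ProbabilityTheory Filter Matrix
open scoped BigOperators ENNReal NNReal Topology

noncomputable section

namespace GEE

/-- Euclidean norm of a vector in `Fin k → ℝ`. -/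
def vnorm {k : ℕ} (v : Fin k → ℝ) : ℝ := Real.sqrt (∑ i, v i ^ 2)

/-- Frobenius norm of a real matrix. -/
def fnorm {a b : ℕ} (M : Matrix (Fin a) (Fin b) ℝ) : ℝ :=
  Real.sqrt (∑ i, ∑ j, M i j ^ 2)

/-- The logistic (inverse logit) function. -/
def logistic (t : ℝ) : ℝ := Real.exp t / (1 + Real.exp t)

/-- `Z_n = O_p(a_n)` : boundedness in probability of `Z_n / a_n`. -/
def IsBigOP {Ω : ℕ → Type} [∀ n, MeasurableSpace (Ω n)]
    (P : ∀ n, Measure (Ω n)) (Z : ∀ n, Ω n → ℝ) (a : ℕ → ℝ) : Prop :=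
  ∀ ε : ℝ, 0 < ε → ∃ C : ℝ, 0 < C ∧
    ∀ᶠ n in atTop, P n {ω | C * a n < |Z n ω|} ≤ ENNReal.ofReal ε

/-- `Z_n = o_p(a_n)` : `Z_n / a_n` converges to `0` in probability. -/
def IsLittleOP {Ω : ℕ → Type} [∀ n, MeasurableSpace (Ω n)]
    (P : ∀ n, Measure (Ω n)) (Z : ∀ n, Ω n → ℝ) (a : ℕ → ℝ) : Prop :=
  ∀ ε : ℝ, 0 < ε →
    Tendsto (fun n => P n {ω | ε * a n < |Z n ω|}) atTop (𝓝 0)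

/-- Convergence in distribution to the standard normal law, stated via CDFs. -/
def TendstoStdNormal {Ω : ℕ → Type} [∀ n, MeasurableSpace (Ω n)]
    (P : ∀ n, Measure (Ω n)) (Z : ∀ n, Ω n → ℝ) : Prop :=
  ∀ t : ℝ, Tendsto (fun n => (P n {ω | Z n ω ≤ t}).toReal) atTop
    (𝓝 ((gaussianReal 0 1 (Set.Iic t)).toReal))

/-- Convergence in distribution to the `l`-dimensional standard normal law `N_l(0, I_l)`. -/
def TendstoStdNormalVec {Ω : ℕ → Type} [∀ n, MeasurableSpace (Ω n)] (l : ℕ)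
    (P : ∀ n, Measure (Ω n)) (Z : ∀ n, Ω n → Fin l → ℝ) : Prop :=
  ∀ t : Fin l → ℝ, Tendsto
    (fun n => (P n {ω | ∀ j, Z n ω j ≤ t j}).toReal) atTop
    (𝓝 (((Measure.pi fun _ : Fin l => gaussianReal 0 1) {x | ∀ j, x j ≤ t j}).toReal))

/-- The chi-squared distribution with `l` degrees of freedom, realized as the law of the
sum of squares of `l` i.i.d. standard normals. -/
def chiSq (l : ℕ) : Measure ℝ :=
  Measure.map (fun x : Fin l → ℝ => ∑ j, x j ^ 2)
    (Measure.pi fun _ : Fin l => gaussianReal 0 1)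

/-- Convergence in distribution to the chi-squared law with `l` degrees of freedom. -/
def TendstoChiSq {Ω : ℕ → Type} [∀ n, MeasurableSpace (Ω n)] (l : ℕ)
    (P : ∀ n, Measure (Ω n)) (Z : ∀ n, Ω n → ℝ) : Prop :=
  ∀ t : ℝ, Tendsto (fun n => (P n {ω | Z n ω ≤ t}).toReal) atTop
    (𝓝 ((chiSq l (Set.Iic t)).toReal))

/-- Marginal mean vector `π_i(β)` of cluster `i` under the marginal logistic model. -/
def piv {a b : ℕ} (Xi : Matrix (Fin a) (Fin b) ℝ) (β : Fin b → ℝ) : Fin a → ℝ :=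
  fun j => logistic (Xi.mulVec β j)

/-- The diagonal matrix `A_i(β)^{1/2}`. -/
def Ahalf {a b : ℕ} (Xi : Matrix (Fin a) (Fin b) ℝ) (β : Fin b → ℝ) :
    Matrix (Fin a) (Fin a) ℝ :=
  Matrix.diagonal fun j => Real.sqrt (piv Xi β j * (1 - piv Xi β j))

/-- The diagonal matrix `A_i(β)^{-1/2}`. -/
def Ainvhalf {a b : ℕ} (Xi : Matrix (Fin a) (Fin b) ℝ) (β : Fin b → ℝ) :
    Matrix (Fin a) (Fin a) ℝ :=
  Matrix.diagonal fun j => (Real.sqrt (piv Xi β j * (1 - piv Xi β j)))⁻¹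

/-- Standardized residual `ε_i(β) = A_i(β)^{-1/2} (Y_i - π_i(β))`. -/
def eps {a b : ℕ} (Xi : Matrix (Fin a) (Fin b) ℝ) (β : Fin b → ℝ) (Yi : Fin a → ℝ) :
    Fin a → ℝ :=
  (Ainvhalf Xi β).mulVec (Yi - piv Xi β)

/-- Single-cluster contribution `X_iᵀ A_i^{1/2}(β) W A_i^{-1/2}(β) (Y_i - π_i(β))` to a GEE
estimating function with working inverse-correlation matrix `W`. -/
def Scluster {a b : ℕ} (Xi : Matrix (Fin a) (Fin b) ℝ) (W : Matrix (Fin a) (Fin a) ℝ)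
    (β : Fin b → ℝ) (Yi : Fin a → ℝ) : Fin b → ℝ :=
  (Xiᵀ * Ahalf Xi β * W * Ainvhalf Xi β).mulVec (Yi - piv Xi β)

/-- Single-cluster contribution `X_iᵀ A_i^{1/2}(β) W A_i^{1/2}(β) X_i` to `H̄_n(β)`. -/
def Hcluster {a b : ℕ} (Xi : Matrix (Fin a) (Fin b) ℝ) (W : Matrix (Fin a) (Fin a) ℝ)
    (β : Fin b → ℝ) : Matrix (Fin b) (Fin b) ℝ :=
  Xiᵀ * Ahalf Xi β * W * Ahalf Xi β * Xi

/-- Single-cluster contribution `X_iᵀ A_i^{1/2}(β) W R W A_i^{1/2}(β) X_i` to `M̄_n(β)`. -/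
def Mcluster {a b : ℕ} (Xi : Matrix (Fin a) (Fin b) ℝ) (W R : Matrix (Fin a) (Fin a) ℝ)
    (β : Fin b → ℝ) : Matrix (Fin b) (Fin b) ℝ :=
  Xiᵀ * Ahalf Xi β * W * R * W * Ahalf Xi β * Xi

/-- Single-cluster contribution `X_iᵀ A_i^{1/2}(β) W ε_i(β) ε_i(β)ᵀ W A_i^{1/2}(β) X_i` to the
middle of the sandwich estimator. -/
def Mhatcluster {a b : ℕ} (Xi : Matrix (Fin a) (Fin b) ℝ) (W : Matrix (Fin a) (Fin a) ℝ)
    (β : Fin b → ℝ) (Yi : Fin a → ℝ) : Matrix (Fin b) (Fin b) ℝ :=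
  Xiᵀ * Ahalf Xi β * W * vecMulVec (eps Xi β Yi) (eps Xi β Yi) * W * Ahalf Xi β * Xi

/-- The Jacobian matrix (`∂f/∂βᵀ`) of a map `f : (Fin b → ℝ) → (Fin b → ℝ)` at `β`. -/
def jacobian {b : ℕ} (f : (Fin b → ℝ) → (Fin b → ℝ)) (β : Fin b → ℝ) :
    Matrix (Fin b) (Fin b) ℝ :=
  Matrix.of fun k l => fderiv ℝ (fun x => f x k) β (Pi.single l 1)

/-- Smallest Rayleigh quotient value over unit vectors; equals `λ_min(M)` for symmetric `M`. -/
def lmin {b : ℕ} (M : Matrix (Fin b) (Fin b) ℝ) : ℝ :=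
  sInf {r | ∃ v : Fin b → ℝ, vnorm v = 1 ∧ r = v ⬝ᵥ M.mulVec v}

/-- Largest Rayleigh quotient value over unit vectors; equals `λ_max(M)` for symmetric `M`. -/
def lmax {b : ℕ} (M : Matrix (Fin b) (Fin b) ℝ) : ℝ :=
  sSup {r | ∃ v : Fin b → ℝ, vnorm v = 1 ∧ r = v ⬝ᵥ M.mulVec v}

/-! General GEE versions (arbitrary smooth marginal mean function `μ`). -/

/-- Marginal mean vector `μ_i(β)` in the general GEE model with mean function `mu`. -/
def gpiv {a b : ℕ} (mu : ℝ → ℝ) (Xi : Matrix (Fin a) (Fin b) ℝ) (β : Fin b → ℝ) :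
    Fin a → ℝ :=
  fun j => mu (Xi.mulVec β j)

/-- `A_i(β)^{1/2}` in the general GEE model: diagonal with entries `√(μ̇(X_ijᵀ β))`. -/
def gAhalf {a b : ℕ} (mu : ℝ → ℝ) (Xi : Matrix (Fin a) (Fin b) ℝ) (β : Fin b → ℝ) :
    Matrix (Fin a) (Fin a) ℝ :=
  Matrix.diagonal fun j => Real.sqrt (deriv mu (Xi.mulVec β j))

/-- `A_i(β)^{-1/2}` in the general GEE model. -/
def gAinvhalf {a b : ℕ} (mu : ℝ → ℝ) (Xi : Matrix (Fin a) (Fin b) ℝ) (β : Fin b → ℝ) :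
    Matrix (Fin a) (Fin a) ℝ :=
  Matrix.diagonal fun j => (Real.sqrt (deriv mu (Xi.mulVec β j)))⁻¹

/-- Standardized residual in the general GEE model. -/
def geps {a b : ℕ} (mu : ℝ → ℝ) (Xi : Matrix (Fin a) (Fin b) ℝ) (β : Fin b → ℝ)
    (Yi : Fin a → ℝ) : Fin a → ℝ :=
  (gAinvhalf mu Xi β).mulVec (Yi - gpiv mu Xi β)

/-- Single-cluster contribution to the general GEE estimating function. -/
def gScluster {a b : ℕ} (mu : ℝ → ℝ) (Xi : Matrix (Fin a) (Fin b) ℝ)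
    (W : Matrix (Fin a) (Fin a) ℝ) (β : Fin b → ℝ) (Yi : Fin a → ℝ) : Fin b → ℝ :=
  (Xiᵀ * gAhalf mu Xi β * W * gAinvhalf mu Xi β).mulVec (Yi - gpiv mu Xi β)

/-- Single-cluster contribution to `H̄_n(β)` in the general GEE model. -/
def gHcluster {a b : ℕ} (mu : ℝ → ℝ) (Xi : Matrix (Fin a) (Fin b) ℝ)
    (W : Matrix (Fin a) (Fin a) ℝ) (β : Fin b → ℝ) : Matrix (Fin b) (Fin b) ℝ :=
  Xiᵀ * gAhalf mu Xi β * W * gAhalf mu Xi β * Xi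

/-- Single-cluster contribution to `M̄_n(β)` in the general GEE model. -/
def gMcluster {a b : ℕ} (mu : ℝ → ℝ) (Xi : Matrix (Fin a) (Fin b) ℝ)
    (W R : Matrix (Fin a) (Fin a) ℝ) (β : Fin b → ℝ) : Matrix (Fin b) (Fin b) ℝ :=
  Xiᵀ * gAhalf mu Xi β * W * R * W * gAhalf mu Xi β * Xi

end GEE

open GEE

/-!
Write `Ē₁ₙ = ∑ᵢ Tᵢ(Yᵢ)` as a sum of cluster terms. Every entry of `Tᵢ(Yᵢ)` is a linear
combination of the standardized residuals `ε_{ij}`, hence has mean zero, and the clusters are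
independent, so the cross terms vanish: `E‖Ē₁ₙ‖_F² = ∑ᵢ E‖Tᵢ(Yᵢ)‖_F²`. Submultiplicativity of
the Frobenius norm together with `‖Xᵢ‖_F² ≤ m C² p_n` and `b₁ ≤ π_{ij} ≤ b₂` bounds
`‖Tᵢ(Yᵢ)‖_F` by a constant times `p_n`, which gives `O(n p_n²)`. Finally every Rayleigh quotient
`|bᵀ M b|` with `‖b‖ = 1` is at most `‖M‖_F`, so Markov's inequality for `‖Ē₁ₙ‖_F²` gives the
`O_p(√n p_n)` bound.
-/

namespace GEE

section FrobeniusNorm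

variable {a b c : ℕ}

theorem fnorm_nonneg (M : Matrix (Fin a) (Fin b) ℝ) : 0 ≤ fnorm M := Real.sqrt_nonneg _

theorem fnorm_sq (M : Matrix (Fin a) (Fin b) ℝ) : fnorm M ^ 2 = ∑ i, ∑ j, M i j ^ 2 :=
  Real.sq_sqrt (by positivity)

theorem vnorm_sq {k : ℕ} (v : Fin k → ℝ) : vnorm v ^ 2 = ∑ i, v i ^ 2 :=
  Real.sq_sqrt (by positivity)

theorem abs_apply_le_fnorm (M : Matrix (Fin a) (Fin b) ℝ) (i : Fin a) (j : Fin b) :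
    |M i j| ≤ fnorm M := by
  rw [← Real.sqrt_sq_eq_abs]
  refine Real.sqrt_le_sqrt ?_
  calc M i j ^ 2 ≤ ∑ j', M i j' ^ 2 :=
        Finset.single_le_sum (f := fun j' => M i j' ^ 2) (fun _ _ => sq_nonneg _)
          (Finset.mem_univ j)
    _ ≤ ∑ i', ∑ j', M i' j' ^ 2 :=
        Finset.single_le_sum (f := fun i' => ∑ j', M i' j' ^ 2)
          (fun _ _ => by positivity) (Finset.mem_univ i)

theorem fnorm_sq_le_of_vnorm_le {r : ℝ} {M : Matrix (Fin a) (Fin b) ℝ}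
    (h : ∀ i, vnorm (M i) ≤ r) : fnorm M ^ 2 ≤ a * r ^ 2 := by
  calc fnorm M ^ 2 = ∑ i, vnorm (M i) ^ 2 := by simp only [fnorm_sq, vnorm_sq]
    _ ≤ ∑ _i : Fin a, r ^ 2 :=
        Finset.sum_le_sum fun i _ => pow_le_pow_left₀ (Real.sqrt_nonneg _) (h i) 2
    _ = a * r ^ 2 := by simp

theorem fnorm_single_one (j : Fin a) : fnorm (Matrix.single j j (1 : ℝ)) = 1 := by
  simp [fnorm, Matrix.single_apply, ite_pow, ite_and]

section

attribute [local instance] Matrix.frobeniusSeminormedAddCommGroup Matrix.frobeniusNormedSpace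

theorem fnorm_eq_norm (M : Matrix (Fin a) (Fin b) ℝ) : fnorm M = ‖M‖ := by
  simp only [fnorm, Matrix.frobenius_norm_def, Real.norm_eq_abs, Real.rpow_two, sq_abs,
    Real.sqrt_eq_rpow]

theorem vnorm_eq_norm {k : ℕ} (v : Fin k → ℝ) : vnorm v = ‖WithLp.toLp 2 v‖ := by
  simp [vnorm, EuclideanSpace.norm_eq]

theorem fnorm_mul_le (M : Matrix (Fin a) (Fin b) ℝ) (N : Matrix (Fin b) (Fin c) ℝ) :
    fnorm (M * N) ≤ fnorm M * fnorm N := by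
  simpa only [fnorm_eq_norm] using Matrix.frobenius_norm_mul M N

theorem fnorm_smul (r : ℝ) (M : Matrix (Fin a) (Fin b) ℝ) : fnorm (r • M) = |r| * fnorm M := by
  simp only [fnorm_eq_norm, norm_smul, Real.norm_eq_abs]

theorem fnorm_sum_le {ι : Type*} (s : Finset ι) (M : ι → Matrix (Fin a) (Fin b) ℝ) :
    fnorm (∑ i ∈ s, M i) ≤ ∑ i ∈ s, fnorm (M i) := by
  simpa only [fnorm_eq_norm] using norm_sum_le s M

theorem fnorm_transpose (M : Matrix (Fin a) (Fin b) ℝ) : fnorm (Mᵀ) = fnorm M := by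
  simp only [fnorm_eq_norm, Matrix.frobenius_norm_transpose]

theorem fnorm_diagonal (d : Fin a → ℝ) : fnorm (Matrix.diagonal d) = vnorm d := by
  rw [fnorm_eq_norm, vnorm_eq_norm, Matrix.frobenius_norm_diagonal]

theorem abs_dotProduct_mulVec_le_fnorm (M : Matrix (Fin a) (Fin a) ℝ) {v : Fin a → ℝ}
    (hv : vnorm v = 1) : |v ⬝ᵥ M *ᵥ v| ≤ fnorm M := by
  have hentry : v ⬝ᵥ M *ᵥ v =
      (Matrix.replicateRow (Fin 1) v * M * Matrix.replicateCol (Fin 1) v) 0 0 := by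
    simp only [Matrix.mul_apply, dotProduct, Matrix.mulVec, Finset.mul_sum, Finset.sum_mul,
      Matrix.replicateRow_apply, Matrix.replicateCol_apply]
    conv_rhs => rw [Finset.sum_comm]
    simp only [mul_assoc]
  rw [vnorm_eq_norm] at hv
  rw [hentry]
  refine (abs_apply_le_fnorm _ 0 0).trans ?_
  rw [fnorm_eq_norm, fnorm_eq_norm]
  calc _ ≤ ‖Matrix.replicateRow (Fin 1) v * M‖ * ‖Matrix.replicateCol (Fin 1) v‖ :=
        Matrix.frobenius_norm_mul _ _
    _ ≤ ‖Matrix.replicateRow (Fin 1) v‖ * ‖M‖ * ‖Matrix.replicateCol (Fin 1) v‖ := by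
        gcongr; exact Matrix.frobenius_norm_mul _ _
    _ = ‖WithLp.toLp 2 v‖ * ‖M‖ * ‖WithLp.toLp 2 v‖ := by
        congr 1
        · exact congrArg (· * ‖M‖) (Matrix.frobenius_norm_replicateRow v)
        · exact Matrix.frobenius_norm_replicateCol v
    _ = ‖M‖ := by rw [hv]; ring

end

theorem abs_sSup_rayleigh_le_fnorm (M : Matrix (Fin a) (Fin a) ℝ) :
    |sSup {r : ℝ | ∃ v : Fin a → ℝ, vnorm v = 1 ∧ r = |v ⬝ᵥ M *ᵥ v|}| ≤ fnorm M := by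
  have hnonneg : ∀ r ∈ {r : ℝ | ∃ v : Fin a → ℝ, vnorm v = 1 ∧ r = |v ⬝ᵥ M *ᵥ v|}, 0 ≤ r := by
    rintro _ ⟨v, _, rfl⟩
    exact abs_nonneg _
  rw [abs_of_nonneg (Real.sSup_nonneg hnonneg)]
  refine Real.sSup_le ?_ (fnorm_nonneg M)
  rintro _ ⟨v, hv, rfl⟩
  exact abs_dotProduct_mulVec_le_fnorm M hv

end FrobeniusNorm

section SecondMoment

variable {Ω : Type*} [MeasurableSpace Ω] {μ : Measure Ω}

theorem integral_sq_sum_of_pairwise_indepFun [IsProbabilityMeasure μ] {ι : Type*} [Fintype ι]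
    {f : ι → Ω → ℝ} (hL2 : ∀ i, MemLp (f i) 2 μ)
    (hind : Pairwise fun i j => IndepFun (f i) (f j) μ) (hmean : ∀ i, ∫ ω, f i ω ∂μ = 0) :
    ∫ ω, (∑ i, f i ω) ^ 2 ∂μ = ∑ i, ∫ ω, f i ω ^ 2 ∂μ := by
  have hsum : (fun ω => ∑ i, f i ω) = ∑ i, f i := by ext; simp
  rw [← variance_of_integral_eq_zero, hsum,
    IndepFun.variance_sum (fun i _ => hL2 i) (fun i _ j _ hij => hind hij)]
  · exact Finset.sum_congr rfl fun i _ =>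
      variance_of_integral_eq_zero (hL2 i).aestronglyMeasurable.aemeasurable (hmean i)
  · exact hsum ▸ (memLp_finsetSum' _ fun i _ => hL2 i).aestronglyMeasurable.aemeasurable
  · rw [integral_finsetSum _ fun i _ => (hL2 i).integrable one_le_two]
    exact Finset.sum_eq_zero fun i _ => hmean i

variable {a b : ℕ}

theorem integrable_fnorm_sq {M : Ω → Matrix (Fin a) (Fin b) ℝ}
    (hL2 : ∀ k l, MemLp (fun ω => M ω k l) 2 μ) :
    Integrable (fun ω => fnorm (M ω) ^ 2) μ := by
  simp_rw [fnorm_sq]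
  exact integrable_finsetSum _ fun k _ => integrable_finsetSum _ fun l _ =>
    (hL2 k l).integrable_sq

theorem integral_fnorm_sq {M : Ω → Matrix (Fin a) (Fin b) ℝ}
    (hL2 : ∀ k l, MemLp (fun ω => M ω k l) 2 μ) :
    ∫ ω, fnorm (M ω) ^ 2 ∂μ = ∑ k, ∑ l, ∫ ω, M ω k l ^ 2 ∂μ := by
  simp_rw [fnorm_sq]
  rw [integral_finsetSum _ fun k _ => integrable_finsetSum _ fun l _ =>
    (hL2 k l).integrable_sq]
  exact Finset.sum_congr rfl fun k _ =>
    integral_finsetSum _ fun l _ => (hL2 k l).integrable_sq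

theorem integral_fnorm_sq_sum_of_iIndepFun [IsProbabilityMeasure μ] {ι β : Type*} [Fintype ι]
    [MeasurableSpace β] {Y : ι → Ω → β} (hind : iIndepFun Y μ)
    {g : ι → β → Matrix (Fin a) (Fin b) ℝ} (hg : ∀ i k l, Measurable fun y => g i y k l)
    (hL2 : ∀ i k l, MemLp (fun ω => g i (Y i ω) k l) 2 μ)
    (hmean : ∀ i k l, ∫ ω, g i (Y i ω) k l ∂μ = 0) :
    ∫ ω, fnorm (∑ i, g i (Y i ω)) ^ 2 ∂μ = ∑ i, ∫ ω, fnorm (g i (Y i ω)) ^ 2 ∂μ := by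
  have hL2sum : ∀ k l, MemLp (fun ω => (∑ i, g i (Y i ω)) k l) 2 μ := fun k l => by
    simpa only [Matrix.sum_apply] using memLp_finsetSum Finset.univ fun i _ => hL2 i k l
  simp_rw [integral_fnorm_sq hL2sum, integral_fnorm_sq (hL2 _), Matrix.sum_apply]
  calc ∑ k, ∑ l, ∫ ω, (∑ i, g i (Y i ω) k l) ^ 2 ∂μ
      = ∑ k, ∑ l, ∑ i, ∫ ω, g i (Y i ω) k l ^ 2 ∂μ :=
        Finset.sum_congr rfl fun k _ => Finset.sum_congr rfl fun l _ =>
          integral_sq_sum_of_pairwise_indepFun (fun i => hL2 i k l)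
            (fun i j hij => (hind.indepFun hij).comp (hg i k l) (hg j k l)) (fun i => hmean i k l)
    _ = ∑ i, ∑ k, ∑ l, ∫ ω, g i (Y i ω) k l ^ 2 ∂μ :=
        (Finset.sum_congr rfl fun k _ => Finset.sum_comm).trans Finset.sum_comm

end SecondMoment

theorem isBigOP_of_integral_sq_le {Ω : ℕ → Type} [∀ n, MeasurableSpace (Ω n)]
    {P : ∀ n, Measure (Ω n)} [∀ n, IsFiniteMeasure (P n)] {Z G : ∀ n, Ω n → ℝ} {a : ℕ → ℝ}
    {D : ℝ} (hZG : ∀ n ω, |Z n ω| ≤ G n ω) (hG : ∀ n, Integrable (fun ω => G n ω ^ 2) (P n))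
    (hD : ∀ n, ∫ ω, G n ω ^ 2 ∂(P n) ≤ D * a n ^ 2) (ha : ∀ᶠ n in atTop, 0 < a n) :
    IsBigOP P Z a := by
  intro ε hε
  set C := Real.sqrt ((|D| + 1) / ε)
  have hC2 : C ^ 2 = (|D| + 1) / ε := Real.sq_sqrt (by positivity)
  refine ⟨C, by positivity, ?_⟩
  filter_upwards [ha] with n hn
  have hsub : {ω | C * a n < |Z n ω|} ⊆ {ω | (C * a n) ^ 2 ≤ G n ω ^ 2} := fun ω hω =>
    pow_le_pow_left₀ (by positivity) (hω.le.trans (hZG n ω)) 2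
  have hmarkov := mul_meas_ge_le_integral_of_nonneg (ae_of_all _ fun ω => sq_nonneg (G n ω))
    (hG n) ((C * a n) ^ 2)
  have hprob : (P n {ω | (C * a n) ^ 2 ≤ G n ω ^ 2}).toReal ≤ ε := by
    rw [← mul_le_mul_iff_right₀ (by positivity : 0 < (C * a n) ^ 2)]
    calc (C * a n) ^ 2 * (P n {ω | (C * a n) ^ 2 ≤ G n ω ^ 2}).toReal
        ≤ D * a n ^ 2 := hmarkov.trans (hD n)
      _ ≤ (C * a n) ^ 2 * ε := by
        rw [mul_pow, hC2]
        field_simp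
        nlinarith [le_abs_self D, sq_nonneg (a n)]
  calc P n {ω | C * a n < |Z n ω|} ≤ P n {ω | (C * a n) ^ 2 ≤ G n ω ^ 2} := measure_mono hsub
    _ = ENNReal.ofReal (P n {ω | (C * a n) ^ 2 ≤ G n ω ^ 2}).toReal :=
        (ENNReal.ofReal_toReal (measure_ne_top _ _)).symm
    _ ≤ ENNReal.ofReal ε := ENNReal.ofReal_le_ofReal hprob

def E1cluster {a b : ℕ} (Xi : Matrix (Fin a) (Fin b) ℝ) (W : Matrix (Fin a) (Fin a) ℝ)
    (β : Fin b → ℝ) (y : Fin a → ℝ) : Matrix (Fin b) (Fin b) ℝ :=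
  (1 / 2 : ℝ) • ∑ j, ((1 - 2 * piv Xi β j) * eps Xi β y j) •
    (Xiᵀ * Ahalf Xi β * W * Matrix.single j j (1 : ℝ) * Xi)

section Cluster

variable {a b : ℕ} (Xi : Matrix (Fin a) (Fin b) ℝ) (W : Matrix (Fin a) (Fin a) ℝ)
  (β : Fin b → ℝ)

theorem fnorm_Ahalf_le : fnorm (Ahalf Xi β) ≤ Real.sqrt a / 2 := by
  have hentry : ∀ j, Real.sqrt (piv Xi β j * (1 - piv Xi β j)) ^ 2 ≤ (1 / 2) ^ 2 := fun j =>
    pow_le_pow_left₀ (Real.sqrt_nonneg _)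
      (Real.sqrt_le_iff.2 ⟨by norm_num, by nlinarith [sq_nonneg (piv Xi β j - 1 / 2)]⟩) 2
  rw [Ahalf, fnorm_diagonal, vnorm]
  calc _ ≤ Real.sqrt (∑ _j : Fin a, (1 / 2) ^ 2) :=
        Real.sqrt_le_sqrt (Finset.sum_le_sum fun j _ => hentry j)
    _ = Real.sqrt a / 2 := by
        rw [Finset.sum_const, Finset.card_univ, Fintype.card_fin, nsmul_eq_mul, Real.sqrt_mul',
          Real.sqrt_sq] <;> norm_num
        ring

theorem eps_apply (y : Fin a → ℝ) (j : Fin a) :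
    eps Xi β y j = (Real.sqrt (piv Xi β j * (1 - piv Xi β j)))⁻¹ * (y j - piv Xi β j) := by
  simp [eps, Ainvhalf, Matrix.mulVec_diagonal]

theorem E1cluster_apply (y : Fin a → ℝ) (k l : Fin b) :
    E1cluster Xi W β y k l = ∑ j, eps Xi β y j * ((1 - 2 * piv Xi β j) / 2 *
      (Xiᵀ * Ahalf Xi β * W * Matrix.single j j (1 : ℝ) * Xi) k l) := by
  simp only [E1cluster, Matrix.smul_apply, Matrix.sum_apply, smul_eq_mul, Finset.mul_sum]
  exact Finset.sum_congr rfl fun j _ => by ring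

theorem measurable_E1cluster_apply (k l : Fin b) :
    Measurable fun y => E1cluster Xi W β y k l := by
  simp_rw [E1cluster_apply, eps_apply]
  fun_prop

theorem integral_E1cluster_apply {Ω : Type*} [MeasurableSpace Ω] {μ : Measure Ω}
    [IsProbabilityMeasure μ] {Y : Ω → Fin a → ℝ} (hint : ∀ j, Integrable (fun ω => Y ω j) μ)
    (hmean : ∀ j, ∫ ω, Y ω j ∂μ = piv Xi β j) (k l : Fin b) :
    ∫ ω, E1cluster Xi W β (Y ω) k l ∂μ = 0 := by
  have heps : ∀ j, ∫ ω, eps Xi β (Y ω) j ∂μ = 0 := fun j => by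
    simp_rw [eps_apply]
    rw [integral_const_mul, integral_sub (hint j) (integrable_const _), hmean j]
    simp
  simp_rw [E1cluster_apply]
  rw [integral_finsetSum]
  · exact Finset.sum_eq_zero fun j _ => by rw [integral_mul_const, heps j, zero_mul]
  · intro j _
    simp_rw [eps_apply]
    exact (((hint j).sub (integrable_const _)).const_mul _).mul_const _

theorem abs_one_sub_two_mul_piv_mul_eps_le {b1 b2 : ℝ} (hb1 : 0 < b1) (hb2 : b2 < 1)
    {y : Fin a → ℝ} (j : Fin a) (hπ : b1 ≤ piv Xi β j ∧ piv Xi β j ≤ b2)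
    (hy : |y j - piv Xi β j| ≤ 1) :
    |(1 - 2 * piv Xi β j) * eps Xi β y j| ≤ (Real.sqrt (b1 * (1 - b2)))⁻¹ := by
  have hs : Real.sqrt (b1 * (1 - b2)) ≤ Real.sqrt (piv Xi β j * (1 - piv Xi β j)) :=
    Real.sqrt_le_sqrt (by nlinarith)
  have hpos : 0 < Real.sqrt (b1 * (1 - b2)) := Real.sqrt_pos.2 (by nlinarith)
  have h12 : |1 - 2 * piv Xi β j| ≤ 1 := abs_le.2 ⟨by linarith, by linarith⟩
  rw [eps_apply, abs_mul, abs_mul, abs_inv, abs_of_pos (hpos.trans_le hs)]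
  calc _ ≤ 1 * ((Real.sqrt (b1 * (1 - b2)))⁻¹ * 1) := by gcongr
    _ = _ := by ring

theorem fnorm_E1cluster_le {b1 b2 r : ℝ} (hb1 : 0 < b1) (hb2 : b2 < 1) {y : Fin a → ℝ}
    (hπ : ∀ j, b1 ≤ piv Xi β j ∧ piv Xi β j ≤ b2) (hy : ∀ j, |y j - piv Xi β j| ≤ 1)
    (hX : ∀ j, vnorm (Xi j) ≤ r) :
    fnorm (E1cluster Xi W β y) ≤
      a * Real.sqrt a / 4 * (Real.sqrt (b1 * (1 - b2)))⁻¹ * fnorm W * (a * r ^ 2) := by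
  have hterm : ∀ j : Fin a, fnorm (Xiᵀ * Ahalf Xi β * W * Matrix.single j j (1 : ℝ) * Xi) ≤
      Real.sqrt a / 2 * fnorm W * fnorm Xi ^ 2 := fun j =>
    calc _ ≤ fnorm (Xiᵀ) * fnorm (Ahalf Xi β) * fnorm W * fnorm (Matrix.single j j (1 : ℝ)) *
          fnorm Xi := by
          refine (fnorm_mul_le _ _).trans (mul_le_mul_of_nonneg_right ?_ (fnorm_nonneg _))
          refine (fnorm_mul_le _ _).trans (mul_le_mul_of_nonneg_right ?_ (fnorm_nonneg _))
          refine (fnorm_mul_le _ _).trans (mul_le_mul_of_nonneg_right ?_ (fnorm_nonneg _))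
          exact fnorm_mul_le _ _
      _ ≤ fnorm Xi * (Real.sqrt a / 2) * fnorm W * 1 * fnorm Xi := by
          have := fnorm_nonneg Xi
          have := fnorm_nonneg W
          rw [fnorm_transpose, fnorm_single_one]
          gcongr
          exact fnorm_Ahalf_le Xi β
      _ = Real.sqrt a / 2 * fnorm W * fnorm Xi ^ 2 := by ring
  calc fnorm (E1cluster Xi W β y)
      ≤ 1 / 2 * ∑ j, |(1 - 2 * piv Xi β j) * eps Xi β y j| *
          fnorm (Xiᵀ * Ahalf Xi β * W * Matrix.single j j (1 : ℝ) * Xi) := by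
        rw [E1cluster, fnorm_smul, abs_of_pos one_half_pos]
        gcongr
        refine (fnorm_sum_le _ _).trans_eq ?_
        simp only [fnorm_smul]
    _ ≤ 1 / 2 * ∑ _j : Fin a, (Real.sqrt (b1 * (1 - b2)))⁻¹ *
          (Real.sqrt a / 2 * fnorm W * fnorm Xi ^ 2) := by
        gcongr with j
        · exact fnorm_nonneg _
        · exact abs_one_sub_two_mul_piv_mul_eps_le Xi β hb1 hb2 j (hπ j) (hy j)
        · exact hterm j
    _ = a * Real.sqrt a / 4 * (Real.sqrt (b1 * (1 - b2)))⁻¹ * fnorm W * fnorm Xi ^ 2 := by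
        rw [Finset.sum_const, Finset.card_univ, Fintype.card_fin, nsmul_eq_mul]; ring
    _ ≤ _ := by
        have := fnorm_nonneg W
        gcongr
        exact fnorm_sq_le_of_vnorm_le hX

end Cluster

section ClusterSum

variable {Ω : Type*} [MeasurableSpace Ω] {μ : Measure Ω} [IsProbabilityMeasure μ] {n a b : ℕ}
  {X : Fin n → Matrix (Fin a) (Fin b) ℝ} {W : Matrix (Fin a) (Fin a) ℝ} {β : Fin b → ℝ}
  {Y : Fin n → Ω → Fin a → ℝ} {K : ℝ}

theorem memLp_E1cluster_apply (hY : ∀ i, Measurable (Y i))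
    (hK : ∀ i ω, fnorm (E1cluster (X i) W β (Y i ω)) ≤ K) (i : Fin n) (k l : Fin b) :
    MemLp (fun ω => E1cluster (X i) W β (Y i ω) k l) 2 μ :=
  MemLp.of_bound ((measurable_E1cluster_apply _ _ _ k l).comp (hY i)).aestronglyMeasurable K
    (ae_of_all _ fun ω => (abs_apply_le_fnorm _ k l).trans (hK i ω))

theorem integrable_fnorm_sq_sum_E1cluster (hY : ∀ i, Measurable (Y i))
    (hK : ∀ i ω, fnorm (E1cluster (X i) W β (Y i ω)) ≤ K) :
    Integrable (fun ω => fnorm (∑ i, E1cluster (X i) W β (Y i ω)) ^ 2) μ :=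
  integrable_fnorm_sq fun k l => by
    simpa only [Matrix.sum_apply] using
      memLp_finsetSum Finset.univ fun i _ => memLp_E1cluster_apply hY hK i k l

theorem integral_fnorm_sq_sum_E1cluster_le (hY : ∀ i, Measurable (Y i)) (hind : iIndepFun Y μ)
    (hint : ∀ i j, Integrable (fun ω => Y i ω j) μ)
    (hmean : ∀ i j, ∫ ω, Y i ω j ∂μ = piv (X i) β j)
    (hK : ∀ i ω, fnorm (E1cluster (X i) W β (Y i ω)) ≤ K) :
    ∫ ω, fnorm (∑ i, E1cluster (X i) W β (Y i ω)) ^ 2 ∂μ ≤ n * K ^ 2 := by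
  rw [integral_fnorm_sq_sum_of_iIndepFun hind (fun i => measurable_E1cluster_apply (X i) W β)
    (memLp_E1cluster_apply hY hK) fun i => integral_E1cluster_apply (X i) W β (hint i) (hmean i)]
  calc ∑ i, ∫ ω, fnorm (E1cluster (X i) W β (Y i ω)) ^ 2 ∂μ ≤ ∑ _i : Fin n, K ^ 2 := by
        refine Finset.sum_le_sum fun i _ => ?_
        refine (integral_mono (integrable_fnorm_sq (memLp_E1cluster_apply hY hK i))
          (integrable_const (K ^ 2)) fun ω => ?_).trans_eq (by simp)
        exact pow_le_pow_left₀ (fnorm_nonneg _) (hK i ω) 2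
    _ = n * K ^ 2 := by simp

end ClusterSum

end GEE

open GEE

theorem gee_E1n_bound_general
    (m : ℕ) (p : ℕ → ℕ) (hp : ∀ n, 0 < p n)
    (Ω : ℕ → Type) [∀ n, MeasurableSpace (Ω n)]
    (P : ∀ n, Measure (Ω n)) [∀ n, IsProbabilityMeasure (P n)]
    (X : ∀ n, Fin n → Matrix (Fin m) (Fin (p n)) ℝ)
    (Y : ∀ n, Fin n → Ω n → Fin m → ℝ)
    (β0 : ∀ n, Fin (p n) → ℝ)
    (hmeas : ∀ n i, Measurable (Y n i))
    (hbin : ∀ n i ω j, Y n i ω j = 0 ∨ Y n i ω j = 1)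
    (hindep : ∀ n, iIndepFun (fun i => Y n i) (P n))
    (hmean : ∀ n (i : Fin n) j, ∫ ω, Y n i ω j ∂(P n) = piv (X n i) (β0 n) j)
    (hA1 : ∃ C : ℝ, ∀ n (i : Fin n) j, vnorm (X n i j) ≤ C * Real.sqrt (p n))
    (b1 b2 : ℝ) (hb1 : 0 < b1) (hb2 : b2 < 1)
    (hA2 : ∀ n (i : Fin n) j, b1 ≤ piv (X n i) (β0 n) j ∧ piv (X n i) (β0 n) j ≤ b2)
    (Rbar : Matrix (Fin m) (Fin m) ℝ) :
    ∀ E1 : ∀ n, Ω n → Matrix (Fin (p n)) (Fin (p n)) ℝ,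
      (∀ n ω, E1 n ω = (1 / 2 : ℝ) • ∑ i, ∑ j,
        ((1 - 2 * piv (X n i) (β0 n) j) * eps (X n i) (β0 n) (Y n i ω) j) •
          ((X n i)ᵀ * Ahalf (X n i) (β0 n) * Rbar⁻¹ * Matrix.single j j (1 : ℝ) * X n i)) →
      (∃ C : ℝ, 0 < C ∧ ∀ n,
          ∫ ω, fnorm (E1 n ω) ^ 2 ∂(P n) ≤ C * (n * (p n : ℝ) ^ 2)) ∧
      IsBigOP P (fun n ω => sSup {r : ℝ | ∃ b : Fin (p n) → ℝ,
          vnorm b = 1 ∧ r = |b ⬝ᵥ (E1 n ω).mulVec b|})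
        (fun n => Real.sqrt n * p n) := by
  intro E1 hE1
  obtain ⟨C, hC⟩ := hA1
  set K := m * Real.sqrt m / 4 * (Real.sqrt (b1 * (1 - b2)))⁻¹ * fnorm Rbar⁻¹ * (m * C ^ 2)
  have hresid : ∀ n i ω j, |Y n i ω j - piv (X n i) (β0 n) j| ≤ 1 := fun n i ω j => by
    have := hA2 n i j
    rcases hbin n i ω j with h | h <;> rw [h, abs_le] <;> constructor <;> linarith
  have hK : ∀ n i ω, fnorm (E1cluster (X n i) Rbar⁻¹ (β0 n) (Y n i ω)) ≤ K * p n :=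
    fun n i ω => (fnorm_E1cluster_le _ _ _ hb1 hb2 (hA2 n i) (hresid n i ω) (hC n i)).trans_eq
      (by rw [mul_pow, Real.sq_sqrt (Nat.cast_nonneg _)]; ring)
  have hint : ∀ n i j, Integrable (fun ω => Y n i ω j) (P n) := fun n i j =>
    (integrable_const (1 : ℝ)).mono' ((measurable_pi_apply j).comp (hmeas n i)).aestronglyMeasurable
      (ae_of_all _ fun ω => by rcases hbin n i ω j with h | h <;> simp [h])
  have hE1sum : ∀ n ω, E1 n ω = ∑ i, E1cluster (X n i) Rbar⁻¹ (β0 n) (Y n i ω) := by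
    intro n ω
    simp only [hE1, E1cluster, Finset.smul_sum]
  have hmoment : ∀ n, ∫ ω, fnorm (E1 n ω) ^ 2 ∂(P n) ≤ K ^ 2 * (n * (p n : ℝ) ^ 2) := by
    intro n
    simp_rw [hE1sum n]
    exact (integral_fnorm_sq_sum_E1cluster_le (hmeas n) (hindep n) (hint n) (hmean n)
      (hK n)).trans_eq (by ring)
  refine ⟨⟨K ^ 2 + 1, by positivity, fun n => (hmoment n).trans (by gcongr; linarith)⟩, ?_⟩
  refine isBigOP_of_integral_sq_le (D := K ^ 2) (fun n ω => abs_sSup_rayleigh_le_fnorm (E1 n ω))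
    (fun n => by simp_rw [hE1sum n]; exact integrable_fnorm_sq_sum_E1cluster (hmeas n) (hK n))
    (fun n => (hmoment n).trans_eq (by rw [mul_pow (Real.sqrt n), Real.sq_sqrt n.cast_nonneg]))
    (Filter.eventually_gt_atTop 0 |>.mono fun n hn => by have := hp n; positivity)

/-- Frobenius-norm second-moment bound for Ē₁ₙ(β₀) and the induced
O_p(√n·p_n) bound for its extreme Rayleigh quotients. -/
theorem gee_E1n_bound
    (m : ℕ) (hm : 0 < m) (p : ℕ → ℕ) (hp : ∀ n, 0 < p n)
    (Ω : ℕ → Type) [∀ n, MeasurableSpace (Ω n)]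
    (P : ∀ n, Measure (Ω n)) [∀ n, IsProbabilityMeasure (P n)]
    (X : ∀ n, Fin n → Matrix (Fin m) (Fin (p n)) ℝ)
    (Y : ∀ n, Fin n → Ω n → Fin m → ℝ)
    (β0 : ∀ n, Fin (p n) → ℝ)
    (hmeas : ∀ n i, Measurable (Y n i))
    (hbin : ∀ n i ω j, Y n i ω j = 0 ∨ Y n i ω j = 1)
    (hindep : ∀ n, iIndepFun (fun i => Y n i) (P n))
    (hmean : ∀ n (i : Fin n) j, ∫ ω, Y n i ω j ∂(P n) = piv (X n i) (β0 n) j)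
    (R0 : Matrix (Fin m) (Fin m) ℝ) (hR0 : R0.PosDef)
    (hcorr : ∀ n (i : Fin n) j j',
      ∫ ω, eps (X n i) (β0 n) (Y n i ω) j * eps (X n i) (β0 n) (Y n i ω) j' ∂(P n) = R0 j j')
    (hA1 : ∃ C : ℝ, ∀ n (i : Fin n) j, vnorm (X n i j) ≤ C * Real.sqrt (p n))
    (b1 b2 : ℝ) (hb1 : 0 < b1) (hb2 : b2 < 1)
    (hA2 : ∀ n (i : Fin n) j, b1 ≤ piv (X n i) (β0 n) j ∧ piv (X n i) (β0 n) j ≤ b2)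
    (hA2c : ∀ n, ∃ B : Set (Fin (p n) → ℝ), IsCompact B ∧ β0 n ∈ interior B)
    (b3 b4 : ℝ) (hb3 : 0 < b3)
    (hA3 : ∀ n, 0 < n → ∀ v : Fin (p n) → ℝ,
      b3 * (∑ k, v k ^ 2) ≤ (n : ℝ)⁻¹ * (v ⬝ᵥ (∑ i, (X n i)ᵀ * X n i).mulVec v) ∧
      (n : ℝ)⁻¹ * (v ⬝ᵥ (∑ i, (X n i)ᵀ * X n i).mulVec v) ≤ b4 * (∑ k, v k ^ 2))
    (Rbar : Matrix (Fin m) (Fin m) ℝ) (hRbar : Rbar.PosDef) :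
    ∀ E1 : ∀ n, Ω n → Matrix (Fin (p n)) (Fin (p n)) ℝ,
      (∀ n ω, E1 n ω = (1 / 2 : ℝ) • ∑ i, ∑ j,
        ((1 - 2 * piv (X n i) (β0 n) j) * eps (X n i) (β0 n) (Y n i ω) j) •
          ((X n i)ᵀ * Ahalf (X n i) (β0 n) * Rbar⁻¹ * Matrix.single j j (1 : ℝ) * X n i)) →
      (∃ C : ℝ, 0 < C ∧ ∀ n,
          ∫ ω, fnorm (E1 n ω) ^ 2 ∂(P n) ≤ C * (n * (p n : ℝ) ^ 2)) ∧
      IsBigOP P (fun n ω => sSup {r : ℝ | ∃ b : Fin (p n) → ℝ,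
          vnorm b = 1 ∧ r = |b ⬝ᵥ (E1 n ω).mulVec b|})
        (fun n => Real.sqrt n * p n) :=
  gee_E1n_bound_general m p hp Ω P X Y β0 hmeas hbin hindep hmean hA1 b1 b2 hb1 hb2 hA2 Rbar
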